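/- arXiv:1609.05314 — 2 statements merged into one kernel-verified Lean document; each statement's English description precedes it below -/
import Mathlib

section
/- Let δ ∈ (0,1), a > 0 and A ≥ a·κ_δ be real numbers, where κ_δ = δ·∫₀^∞ t^{δ−1}/(1+t) dt. Define B(χ) = a·χ^δ, C(χ) = a·I(χ,δ), and ρ(χ) = (e^{B(χ)−C(χ)} − 1)/√((e^A − 1)(e^{B(χ)} − 1)) for χ > 0. Then 0 < ρ(χ) ≤ 1 for every χ > 0. -/
open Real Filter Set MeasureTheory

/-- `Ifun u δ = δ·∫₀ᵘ t^δ/(1+t) dt`. -/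
noncomputable def Ifun (u δ : ℝ) : ℝ := δ * ∫ t in (0:ℝ)..u, t ^ δ / (1 + t)

/-- `kappa δ = δ·∫₀^∞ t^(δ-1)/(1+t) dt`. -/
noncomputable def kappa (δ : ℝ) : ℝ := δ * ∫ t in Set.Ioi (0:ℝ), t ^ (δ - 1) / (1 + t)

/-!
Since `t^δ/(1+t) = t^(δ-1) - t^(δ-1)/(1+t)` and `δ·∫₀^χ t^(δ-1) dt = χ^δ`, the exponent
`B(χ) - C(χ)` equals `a·δ·∫₀^χ t^(δ-1)/(1+t) dt`, the truncation at `χ` of the integral defining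
`a·κ_δ`. Hence `0 < B(χ) - C(χ) ≤ min(A, B(χ))`, and the numerator `e^{B-C} - 1` is positive and
bounded by both factors under the square root.
-/

section RpowDivOneAdd

variable {s χ : ℝ}

lemma intervalIntegrable_rpow_div_one_add (hs : -1 < s) (hχ : 0 ≤ χ) :
    IntervalIntegrable (fun t : ℝ => t ^ s / (1 + t)) volume 0 χ := by
  have hinv : ContinuousOn (fun t : ℝ => (1 + t)⁻¹) (uIcc 0 χ) := by
    refine ContinuousOn.inv₀ (by fun_prop) fun t ht => ?_
    rw [uIcc_of_le hχ] at ht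
    linarith [ht.1]
  simpa only [div_eq_mul_inv] using (intervalIntegral.intervalIntegrable_rpow' hs).mul_continuousOn hinv

lemma integrableOn_Ioi_rpow_div_one_add (hs₁ : -1 < s) (hs₂ : s < 0) :
    IntegrableOn (fun t : ℝ => t ^ s / (1 + t)) (Ioi 0) := by
  have hIoc : IntegrableOn (fun t : ℝ => t ^ s / (1 + t)) (Ioc 0 1) :=
    (intervalIntegrable_iff_integrableOn_Ioc_of_le zero_le_one).mp
      (intervalIntegrable_rpow_div_one_add hs₁ zero_le_one)
  have hIoi : IntegrableOn (fun t : ℝ => t ^ s / (1 + t)) (Ioi 1) := by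
    have hcont : ContinuousOn (fun t : ℝ => t ^ s / (1 + t)) (Ioi 1) := fun t (ht : 1 < t) =>
      ((continuousAt_rpow_const t s (Or.inl (by linarith))).div (by fun_prop)
        (by linarith)).continuousWithinAt
    refine (integrableOn_Ioi_rpow_of_lt (by linarith : s - 1 < -1) one_pos).mono'
      (hcont.aestronglyMeasurable measurableSet_Ioi) ?_
    filter_upwards [ae_restrict_mem measurableSet_Ioi] with t (ht : 1 < t)
    have ht₀ : 0 < t := one_pos.trans ht
    rw [norm_of_nonneg (by positivity), rpow_sub_one ht₀.ne']
    exact div_le_div_of_nonneg_left (by positivity) ht₀ (by linarith)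
  rw [← Ioc_union_Ioi_eq_Ioi zero_le_one]
  exact hIoc.union hIoi

lemma integral_rpow_div_one_add_pos (hs : -1 < s) (hχ : 0 < χ) :
    0 < ∫ t in (0:ℝ)..χ, t ^ s / (1 + t) :=
  intervalIntegral.intervalIntegral_pos_of_pos_on (intervalIntegrable_rpow_div_one_add hs hχ.le)
    (fun t ht => by have := ht.1; positivity) hχ

lemma integral_rpow_div_one_add_le_integral_Ioi (hs₁ : -1 < s) (hs₂ : s < 0) (hχ : 0 ≤ χ) :
    ∫ t in (0:ℝ)..χ, t ^ s / (1 + t) ≤ ∫ t in Ioi (0:ℝ), t ^ s / (1 + t) := by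
  rw [intervalIntegral.integral_of_le hχ]
  refine setIntegral_mono_set (integrableOn_Ioi_rpow_div_one_add hs₁ hs₂) ?_
    (Ioc_subset_Ioi_self.eventuallyLE)
  filter_upwards [ae_restrict_mem measurableSet_Ioi] with t (ht : 0 < t)
  positivity

end RpowDivOneAdd

lemma rpow_sub_one_div_one_add {δ t : ℝ} (hδ : δ ≠ 0) (ht : 0 ≤ t) :
    t ^ (δ - 1) / (1 + t) = t ^ (δ - 1) - t ^ δ / (1 + t) := by
  have h : t ^ δ = t ^ (δ - 1) * t := by
    simpa only [sub_add_cancel] using rpow_add_one' ht (by simpa using hδ : δ - 1 + 1 ≠ 0)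
  rw [h]
  field_simp
  ring

lemma rpow_sub_Ifun {δ χ : ℝ} (hδ : 0 < δ) (hχ : 0 ≤ χ) :
    χ ^ δ - Ifun χ δ = δ * ∫ t in (0:ℝ)..χ, t ^ (δ - 1) / (1 + t) := by
  have hpow : δ * ∫ t in (0:ℝ)..χ, t ^ (δ - 1) = χ ^ δ := by
    rw [integral_rpow (Or.inl (by linarith)), sub_add_cancel, zero_rpow hδ.ne', sub_zero,
      mul_div_cancel₀ _ hδ.ne']
  have hcongr : EqOn (fun t : ℝ => t ^ (δ - 1) / (1 + t))
      (fun t => t ^ (δ - 1) - t ^ δ / (1 + t)) (uIcc 0 χ) := fun t ht => by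
    rw [uIcc_of_le hχ] at ht
    exact rpow_sub_one_div_one_add hδ.ne' ht.1
  rw [intervalIntegral.integral_congr hcongr, intervalIntegral.integral_sub
    (intervalIntegral.intervalIntegrable_rpow' (by linarith))
    (intervalIntegrable_rpow_div_one_add (by linarith) hχ), Ifun, ← hpow]
  ring

lemma Ifun_nonneg {δ χ : ℝ} (hδ : 0 ≤ δ) (hχ : 0 ≤ χ) : 0 ≤ Ifun χ δ :=
  mul_nonneg hδ <| intervalIntegral.integral_nonneg hχ fun t ht => by
    have := ht.1; positivity

lemma div_sqrt_mul_mem_Ioc {u v w : ℝ} (hu : 0 < u) (huv : u ≤ v) (huw : u ≤ w) :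
    u / √(v * w) ∈ Ioc 0 1 := by
  have hle : u ≤ √(v * w) := by
    calc u = √(u * u) := (sqrt_mul_self hu.le).symm
      _ ≤ √(v * w) := sqrt_le_sqrt (mul_le_mul huv huw hu.le (hu.trans_le huv).le)
  exact ⟨div_pos hu (hu.trans_le hle), (div_le_one (hu.trans_le hle)).mpr hle⟩

theorem correlation_pos_le_one
    (δ a A : ℝ) (hδ : δ ∈ Set.Ioo (0:ℝ) 1) (ha : 0 < a) (hA : a * kappa δ ≤ A)
    (B C ρ : ℝ → ℝ)
    (hB : ∀ χ, B χ = a * χ ^ δ)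
    (hC : ∀ χ, C χ = a * Ifun χ δ)
    (hρ : ∀ χ, 0 < χ → ρ χ =
      (Real.exp (B χ - C χ) - 1) /
        Real.sqrt ((Real.exp A - 1) * (Real.exp (B χ) - 1))) :
    ∀ χ, 0 < χ → 0 < ρ χ ∧ ρ χ ≤ 1 := by
  obtain ⟨hδ₀, hδ₁⟩ := hδ
  intro χ hχ
  have hBC : B χ - C χ = a * (δ * ∫ t in (0:ℝ)..χ, t ^ (δ - 1) / (1 + t)) := by
    rw [hB, hC, ← mul_sub, rpow_sub_Ifun hδ₀ hχ.le]
  have hpos : 0 < B χ - C χ := by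
    rw [hBC]
    have := integral_rpow_div_one_add_pos (by linarith : -1 < δ - 1) hχ
    positivity
  have hle_A : B χ - C χ ≤ A :=
    calc B χ - C χ = a * (δ * ∫ t in (0:ℝ)..χ, t ^ (δ - 1) / (1 + t)) := hBC
      _ ≤ a * kappa δ := by
        rw [kappa]
        gcongr
        exact integral_rpow_div_one_add_le_integral_Ioi (by linarith) (by linarith) hχ.le
      _ ≤ A := hA
  have hle_B : B χ - C χ ≤ B χ := by
    linarith [hC χ ▸ mul_nonneg ha.le (Ifun_nonneg hδ₀.le hχ.le)]
  rw [hρ χ hχ]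
  exact div_sqrt_mul_mem_Ioc (sub_pos.mpr (one_lt_exp_iff.mpr hpos))
    (by gcongr) (by gcongr)
end

section
/- Let n be a positive natural number, α > n a real number, δ = n/α, and let λ > 0, c > 0, σ > 0, η ≥ 0 be real numbers. Let c₀₀, c₀₁, c₁₀, c₁₁ ≥ 0 satisfy c₁₀ > c₀₀ and c₀₁ > c₁₁. Define A = λ·c·κ_δ·σ^δ + σ·η, B(r) = λ·c·r^n, C(r) = λ·c·σ^δ·I(r^α/σ, δ), and R(r) = c₀₀ + (c₀₁ − c₀₀)·e^{−A} + (c₁₀ − c₀₀)·e^{−B(r)} + (c₁₁ + c₀₀ − c₁₀ − c₀₁)·e^{−A−C(r)} for r > 0. If r* > 0 is a stationary point of R (i.e., the derivative of R vanishes at r*), then R(r*) = c₀₀ + (c₀₁ − c₀₀)·e^{−A} − (c₁₀ − c₀₀)·(σ/(r*)^α)·e^{−B(r*)}. -/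
open Real Filter Set MeasureTheory

/-! The exponents have proportional derivatives: since `σ^δ (r^α/σ)^δ = r^(αδ) = r^n`, the chain rule
gives `C'(r) = B'(r) · r^α / (σ + r^α)`. Hence `R'(r*) = 0` expresses the `e^(-A-C)` term through
the `e^(-B)` term, and substituting back leaves the factor `1 - (σ + r^α)/r^α = -σ/r^α`. -/

lemma continuousOn_rpow_div_one_add {δ : ℝ} (hδ : 0 ≤ δ) :
    ContinuousOn (fun t : ℝ => t ^ δ / (1 + t)) (Ioi (-1)) :=
  (continuous_rpow_const hδ).continuousOn.div (by fun_prop) fun t ht => by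
    rw [mem_Ioi] at ht; linarith

lemma hasDerivAt_integral_rpow_div_one_add {δ u : ℝ} (hδ : 0 ≤ δ) (hu : -1 < u) :
    HasDerivAt (fun v => ∫ t in (0:ℝ)..v, t ^ δ / (1 + t)) (u ^ δ / (1 + u)) u := by
  have hcont := continuousOn_rpow_div_one_add hδ
  have hsub : uIcc 0 u ⊆ Ioi (-1) := fun t ht => (lt_min (by norm_num) hu).trans_le ht.1
  exact intervalIntegral.integral_hasDerivAt_right ((hcont.mono hsub).intervalIntegrable)
    (hcont.stronglyMeasurableAtFilter isOpen_Ioi u hu)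
    (hcont.continuousAt (isOpen_Ioi.mem_nhds hu))

lemma hasDerivAt_Ifun {δ u : ℝ} (hδ : 0 ≤ δ) (hu : -1 < u) :
    HasDerivAt (fun v => Ifun v δ) (δ * (u ^ δ / (1 + u))) u :=
  (hasDerivAt_integral_rpow_div_one_add hδ hu).const_mul δ

lemma hasDerivAt_rpow_mul_Ifun_rpow_div {α δ σ r : ℝ} (hδ : 0 ≤ δ) (hσ : 0 < σ) (hr : 0 < r) :
    HasDerivAt (fun x => σ ^ δ * Ifun (x ^ α / σ) δ)
      (α * δ * r ^ (α * δ - 1) * (r ^ α / (σ + r ^ α))) r := by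
  have hrα : 0 < r ^ α := rpow_pos_of_pos hr α
  have hu : 0 < r ^ α / σ := div_pos hrα hσ
  have h := ((hasDerivAt_Ifun hδ (by linarith : -1 < r ^ α / σ)).comp r
    ((hasDerivAt_rpow_const (Or.inl hr.ne')).div_const σ)).const_mul (σ ^ δ)
  refine h.congr_deriv ?_
  have hpow : σ ^ δ * (r ^ α / σ) ^ δ = r ^ (α * δ) := by
    rw [div_rpow hrα.le hσ.le, ← rpow_mul hr.le, mul_div_cancel₀ _ (rpow_pos_of_pos hσ δ).ne']
  rw [rpow_sub_one hr.ne', rpow_sub_one hr.ne', ← hpow]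
  field_simp

lemma mul_exp_neg_eq_of_hasDerivAt_eq_zero {a p q b w x : ℝ} {f g : ℝ → ℝ}
    (hf : HasDerivAt f b x) (hg : HasDerivAt g (b * w) x) (hb : b ≠ 0) (hw : w ≠ 0)
    (hstat : HasDerivAt (fun y => a + p * exp (-f y) + q * exp (-g y)) 0 x) :
    q * exp (-g x) = -(p * exp (-f x)) / w := by
  have hderiv := ((hasDerivAt_const x a).add (hf.neg.exp.const_mul p)).add
    (hg.neg.exp.const_mul q)
  have hzero : -b * (p * exp (-f x) + q * exp (-g x) * w) = 0 := by
    linear_combination hderiv.unique hstat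
  rw [eq_div_iff hw]
  linear_combination (mul_eq_zero.mp hzero).resolve_left (neg_ne_zero.mpr hb)

theorem bayes_risk_at_stationary_point_general
    (n : ℕ) (hn : 0 < n) (α : ℝ) (hα : (n : ℝ) < α) (δ : ℝ) (hδ : δ = (n : ℝ) / α)
    (lam c σ : ℝ) (hlam : 0 < lam) (hc : 0 < c) (hσ : 0 < σ)
    (c00 c01 c10 c11 : ℝ)
    (A : ℝ) (B C R : ℝ → ℝ)
    (hB : ∀ r, B r = lam * c * r ^ (n : ℝ))
    (hC : ∀ r, C r = lam * c * σ ^ δ * Ifun (r ^ α / σ) δ)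
    (hR : ∀ r, R r = c00 + (c01 - c00) * Real.exp (-A) + (c10 - c00) * Real.exp (-(B r))
        + (c11 + c00 - c10 - c01) * Real.exp (-A - C r))
    (rs : ℝ) (hrs : 0 < rs) (hstat : HasDerivAt R 0 rs) :
    R rs = c00 + (c01 - c00) * Real.exp (-A)
        - (c10 - c00) * (σ / rs ^ α) * Real.exp (-(B rs)) := by
  have hn' : (0 : ℝ) < n := Nat.cast_pos.mpr hn
  have hα0 : 0 < α := hn'.trans hα
  have hδ0 : 0 ≤ δ := by rw [hδ]; positivity
  have hαδ : α * δ = n := by rw [hδ]; field_simp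
  have hrα : 0 < rs ^ α := rpow_pos_of_pos hrs α
  have hBd : HasDerivAt B (lam * c * (n * rs ^ ((n : ℝ) - 1))) rs := by
    rw [show B = _ from funext hB]
    exact (hasDerivAt_rpow_const (Or.inl hrs.ne')).const_mul (lam * c)
  have hCd : HasDerivAt (fun r => A + C r)
      (lam * c * (n * rs ^ ((n : ℝ) - 1)) * (rs ^ α / (σ + rs ^ α))) rs := by
    have h := ((hasDerivAt_rpow_mul_Ifun_rpow_div (α := α) hδ0 hσ hrs).const_mul
      (lam * c)).const_add A
    rw [hαδ] at h
    rw [show (fun r => A + C r) = _ from funext fun r => by rw [hC, mul_assoc]]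
    exact h.congr_deriv (by ring)
  have hexpAC := mul_exp_neg_eq_of_hasDerivAt_eq_zero hBd hCd (by positivity) (by positivity)
    (a := c00 + (c01 - c00) * exp (-A)) (p := c10 - c00) (q := c11 + c00 - c10 - c01)
    (by simpa only [← funext hR, neg_add'] using hstat)
  rw [hR, ← neg_add', hexpAC]
  field_simp
  ring

theorem bayes_risk_at_stationary_point
    (n : ℕ) (hn : 0 < n) (α : ℝ) (hα : (n : ℝ) < α) (δ : ℝ) (hδ : δ = (n : ℝ) / α)
    (lam c σ η : ℝ) (hlam : 0 < lam) (hc : 0 < c) (hσ : 0 < σ) (hη : 0 ≤ η)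
    (c00 c01 c10 c11 : ℝ) (hc00 : 0 ≤ c00) (hc01 : 0 ≤ c01) (hc10 : 0 ≤ c10) (hc11 : 0 ≤ c11)
    (h10 : c00 < c10) (h01 : c11 < c01)
    (A : ℝ) (B C R : ℝ → ℝ)
    (hA : A = lam * c * kappa δ * σ ^ δ + σ * η)
    (hB : ∀ r, B r = lam * c * r ^ (n : ℝ))
    (hC : ∀ r, C r = lam * c * σ ^ δ * Ifun (r ^ α / σ) δ)
    (hR : ∀ r, R r = c00 + (c01 - c00) * Real.exp (-A) + (c10 - c00) * Real.exp (-(B r))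
        + (c11 + c00 - c10 - c01) * Real.exp (-A - C r))
    (rs : ℝ) (hrs : 0 < rs) (hstat : HasDerivAt R 0 rs) :
    R rs = c00 + (c01 - c00) * Real.exp (-A)
        - (c10 - c00) * (σ / rs ^ α) * Real.exp (-(B rs)) :=
  bayes_risk_at_stationary_point_general n hn α hα δ hδ lam c σ hlam hc hσ c00 c01 c10 c11 A B C R
    hB hC hR rs hrs hstat
end
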